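/- For all nonnegative integers n and p, the number of pairs (f, D), where f : ℕ → ℕ satisfies f(i) < n for all i < n+p, f is arbitrary (say, equal to 0) on inputs ≥ n+p, and D is a subset of {0,1,…,n-1} such that the image of D ∪ {n,…,n+p-1} under f equals D, is ∑_{k=0}^{n} C(n,k) · n^k · Surj(p+n-k, n-k), where Surj(a,b) denotes the number of surjective functions from a set of size a onto a set of size b. -/

import Mathlib

open Finset


/-- The number of surjective functions from a set of size `a` onto a set of size `b`
(equal to `b! · S(a,b)` where `S` is the Stirling number of the second kind). -/
def surjCount (a b : ℕ) : ℕ :=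
  Fintype.card {f : Fin a → Fin b // Function.Surjective f}

lemma surjCount_card (α β : Type*) [Fintype α] [Fintype β] [DecidableEq α] [DecidableEq β] :
    Fintype.card {f : α → β // Function.Surjective f}
      = surjCount (Fintype.card α) (Fintype.card β) := by
  unfold surjCount
  apply Fintype.card_congr
  refine Equiv.subtypeEquiv (Equiv.arrowCongr (Fintype.equivFin α) (Fintype.equivFin β)) ?_
  intro f
  show Function.Surjective f ↔
    Function.Surjective (⇑(Fintype.equivFin β) ∘ f ∘ ⇑(Fintype.equivFin α).symm)
  rw [← Function.comp_assoc, Equiv.surjective_comp, Equiv.comp_surjective]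

/-- The number of functions whose image of a fixed set `s` is exactly `D`. -/
lemma fiber_card {α β : Type*} [Fintype α] [Fintype β] [DecidableEq α] [DecidableEq β]
    (s : Finset α) (D : Finset β) :
    Fintype.card {g : α → β // s.image g = D}
      = Fintype.card β ^ (Fintype.card α - s.card) * surjCount s.card D.card := by
  let e : (α → β) ≃ ({a // a ∈ s} → β) × ({a // a ∉ s} → β) :=
    (Equiv.arrowCongr (Equiv.sumCompl (· ∈ s)) (Equiv.refl β)).symm.trans
      (Equiv.sumArrowEquivProdArrow _ _ β)
  have he : ∀ g : α → β, (e g).1 = fun a : {a // a ∈ s} => g a := by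
    intro g; rfl
  have himg : ∀ g : α → β, s.image g = univ.image (fun a : {a // a ∈ s} => g a) := by
    intro g
    ext b
    simp [Finset.mem_image]
  have e1 : {g : α → β // s.image g = D} ≃
      {x : ({a // a ∈ s} → β) × ({a // a ∉ s} → β) // univ.image x.1 = D} := by
    refine Equiv.subtypeEquiv e ?_
    intro g
    rw [he, himg]
  have e2 : {x : ({a // a ∈ s} → β) × ({a // a ∉ s} → β) // univ.image x.1 = D} ≃
      {h : {a // a ∈ s} → β // univ.image h = D} × ({a // a ∉ s} → β) :=
    ⟨fun x => (⟨x.1.1, x.2⟩, x.1.2), fun y => ⟨(y.1.1, y.2), y.1.2⟩,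
      fun _ => rfl, fun _ => rfl⟩
  have e3 : {h : {a // a ∈ s} → β // univ.image h = D} ≃
      {h : {a // a ∈ s} → {b // b ∈ D} // Function.Surjective h} := by
    refine ⟨fun h => ⟨fun a => ⟨h.1 a, ?_⟩, ?_⟩,
      fun h => ⟨fun a => (h.1 a).1, ?_⟩, ?_, ?_⟩
    · have : h.1 a ∈ univ.image h.1 := Finset.mem_image.2 ⟨a, Finset.mem_univ a, rfl⟩
      rwa [h.2] at this
    · rintro ⟨b, hb⟩
      rw [← h.2] at hb
      obtain ⟨a, -, ha⟩ := Finset.mem_image.1 hb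
      exact ⟨a, Subtype.ext ha⟩
    · ext b
      simp only [Finset.mem_image, Finset.mem_univ, true_and]
      constructor
      · rintro ⟨a, rfl⟩; exact (h.1 a).2
      · intro hb
        obtain ⟨a, ha⟩ := h.2 ⟨b, hb⟩
        exact ⟨a, congrArg Subtype.val ha⟩
    · intro h; rfl
    · intro h; rfl
  rw [Fintype.card_congr (e1.trans e2), Fintype.card_prod, Fintype.card_congr e3,
    surjCount_card, Fintype.card_coe, Fintype.card_coe, Fintype.card_fun,
    Fintype.card_subtype_compl, Fintype.card_coe, mul_comm]

/-- The set `D ∪ {n,…,n+p-1}` realized inside `Fin (n+p)`. -/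
def Aset (n p : ℕ) (D : Finset (Fin n)) : Finset (Fin (n + p)) :=
  Finset.univ.filter (fun i => ∀ h : (i : ℕ) < n, (⟨(i : ℕ), h⟩ : Fin n) ∈ D)

lemma Aset_val (n p : ℕ) (D : Finset (Fin n)) :
    (Aset n p D).image Fin.val = D.image Fin.val ∪ Finset.Ico n (n + p) := by
  ext m
  simp only [Aset, Finset.mem_image, Finset.mem_filter, Finset.mem_univ, true_and,
    Finset.mem_union, Finset.mem_Ico]
  constructor
  · rintro ⟨i, hi, rfl⟩
    by_cases h : (i : ℕ) < n
    · exact Or.inl ⟨⟨i, h⟩, hi h, rfl⟩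
    · exact Or.inr ⟨le_of_not_gt h, i.isLt⟩
  · rintro (⟨x, hx, rfl⟩ | ⟨h1, h2⟩)
    · exact ⟨⟨x, lt_of_lt_of_le x.isLt (Nat.le_add_right n p)⟩,
        fun h => by simpa using hx, rfl⟩
    · exact ⟨⟨m, h2⟩, fun h => absurd h (not_lt.2 h1), rfl⟩

lemma card_Aset (n p : ℕ) (D : Finset (Fin n)) : (Aset n p D).card = p + D.card := by
  have h1 : ((Aset n p D).image Fin.val).card = (Aset n p D).card :=
    Finset.card_image_of_injective _ Fin.val_injective
  have hdisj : Disjoint (D.image Fin.val) (Finset.Ico n (n + p)) := by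
    rw [Finset.disjoint_left]
    rintro m hm hm'
    obtain ⟨x, -, rfl⟩ := Finset.mem_image.1 hm
    exact absurd x.isLt (not_lt.2 (Finset.mem_Ico.1 hm').1)
  rw [← h1, Aset_val, Finset.card_union_of_disjoint hdisj,
    Finset.card_image_of_injective _ Fin.val_injective, Nat.card_Ico]
  omega

lemma cond_transfer (n p : ℕ) (f : ℕ → ℕ) (g : Fin (n + p) → Fin n)
    (D' : Finset (Fin n)) (hfg : ∀ i : Fin (n + p), f i = g i) :
    ((D'.image Fin.val ∪ Finset.Ico n (n + p)).image f = D'.image Fin.val) ↔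
      ((Aset n p D').image g = D') := by
  rw [← Aset_val, Finset.image_image]
  have h : f ∘ Fin.val = Fin.val ∘ g := funext hfg
  rw [h, ← Finset.image_image]
  exact ⟨fun h => Finset.image_injective Fin.val_injective h, fun h => by rw [h]⟩

lemma image_val_attachFin (D : Finset ℕ) {n : ℕ} (h : ∀ m ∈ D, m < n) :
    (D.attachFin h).image Fin.val = D := by
  ext m
  simp only [Finset.mem_image, Finset.mem_attachFin]
  constructor
  · rintro ⟨a, ha, rfl⟩; exact ha
  · intro hm; exact ⟨⟨m, h m hm⟩, hm, rfl⟩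

lemma attachFin_image_val {n : ℕ} (D' : Finset (Fin n))
    (h : ∀ m ∈ D'.image Fin.val, m < n) :
    (D'.image Fin.val).attachFin h = D' := by
  ext a
  simp only [Finset.mem_attachFin, Finset.mem_image]
  constructor
  · rintro ⟨b, hb, hba⟩; exact Fin.val_injective hba ▸ hb
  · intro ha; exact ⟨a, ha, rfl⟩

/-- Pairs `(f, D)` in the `ℕ`-world correspond to pairs `(g, D')` in the `Fin`-world. -/
def kalaiEquiv (n p : ℕ) :
    {fD : (ℕ → ℕ) × Finset ℕ //
        (∀ i < n + p, fD.1 i < n) ∧ (∀ i, n + p ≤ i → fD.1 i = 0) ∧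
        fD.2 ⊆ Finset.range n ∧
        (fD.2 ∪ Finset.Ico n (n + p)).image fD.1 = fD.2} ≃
    {gD : (Fin (n + p) → Fin n) × Finset (Fin n) //
        (Aset n p gD.2).image gD.1 = gD.2} := by
  refine ⟨fun x => ⟨(fun i => ⟨x.1.1 i, x.2.1 i i.isLt⟩,
      x.1.2.attachFin fun m hm => Finset.mem_range.1 (x.2.2.2.1 hm)), ?_⟩,
    fun y => ⟨(fun i => if hi : i < n + p then (y.1.1 ⟨i, hi⟩ : ℕ) else 0,
      y.1.2.image Fin.val), ?_, ?_, ?_, ?_⟩, ?_, ?_⟩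
  · -- forward condition
    obtain ⟨⟨f, D⟩, h1, h2, h3, h4⟩ := x
    refine (cond_transfer n p f _ _ (fun i => rfl)).1 ?_
    rw [_root_.image_val_attachFin]
    exact h4
  · -- maps into range n
    intro i hi
    show (if hi : i < n + p then (y.1.1 ⟨i, hi⟩ : ℕ) else 0) < n
    rw [dif_pos hi]
    exact (y.1.1 ⟨i, hi⟩).isLt
  · -- normalized to 0
    intro i hi
    show (if hi : i < n + p then (y.1.1 ⟨i, hi⟩ : ℕ) else 0) = 0
    rw [dif_neg (not_lt.2 hi)]
  · -- D ⊆ range n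
    intro m hm
    obtain ⟨x, -, rfl⟩ := Finset.mem_image.1 hm
    exact Finset.mem_range.2 x.isLt
  · -- backward condition
    obtain ⟨⟨g, D'⟩, h⟩ := y
    exact (cond_transfer n p _ g D' (fun i => dif_pos i.isLt)).2 h
  · -- left inverse
    rintro ⟨⟨f, D⟩, h1, h2, h3, h4⟩
    apply Subtype.ext
    simp only [Prod.mk.injEq]
    constructor
    · funext i
      by_cases hi : i < n + p
      · rw [dif_pos hi]
      · rw [dif_neg hi]
        exact (h2 i (le_of_not_gt hi)).symm
    · exact _root_.image_val_attachFin D _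
  · -- right inverse
    rintro ⟨⟨g, D'⟩, h⟩
    apply Subtype.ext
    simp only [Prod.mk.injEq]
    constructor
    · funext i
      apply Fin.ext
      show (if hi : (i : ℕ) < n + p then (g ⟨i, hi⟩ : ℕ) else 0) = (g i : ℕ)
      rw [dif_pos i.isLt]
    · exact attachFin_image_val D' _

/-- The right-hand side of Kalai's identity counts pairs `(f, D)`, where `f : ℕ → ℕ`
maps `{0,…,n+p-1}` into `{0,…,n-1}` (and is normalized to `0` on inputs `≥ n+p`),
and `D ⊆ {0,…,n-1}` satisfies `f(D ∪ {n,…,n+p-1}) = D`: their number is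
`∑_{k=0}^n C(n,k) n^k Surj(p+n-k, n-k)`. -/
theorem kalai_rhs_count (n p : ℕ) :
    Nat.card {fD : (ℕ → ℕ) × Finset ℕ //
        (∀ i < n + p, fD.1 i < n) ∧ (∀ i, n + p ≤ i → fD.1 i = 0) ∧
        fD.2 ⊆ Finset.range n ∧
        (fD.2 ∪ Finset.Ico n (n + p)).image fD.1 = fD.2} =
      ∑ k ∈ Finset.range (n + 1), n.choose k * n ^ k * surjCount (p + n - k) (n - k) := by
  rw [Nat.card_congr (kalaiEquiv n p), Nat.card_eq_fintype_card]
  have eσ : {gD : (Fin (n + p) → Fin n) × Finset (Fin n) //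
        (Aset n p gD.2).image gD.1 = gD.2} ≃
      Σ D : Finset (Fin n), {g : Fin (n + p) → Fin n // (Aset n p D).image g = D} :=
    ⟨fun x => ⟨x.1.2, x.1.1, x.2⟩, fun y => ⟨(y.2.1, y.1), y.2.2⟩,
      fun _ => rfl, fun _ => rfl⟩
  rw [Fintype.card_congr eσ, Fintype.card_sigma]
  have hfib : ∀ D : Finset (Fin n),
      Fintype.card {g : Fin (n + p) → Fin n // (Aset n p D).image g = D}
        = n ^ (n - D.card) * surjCount (p + D.card) D.card := by
    intro D
    rw [fiber_card, card_Aset, Fintype.card_fin, Fintype.card_fin]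
    congr 2
    omega
  simp only [hfib]
  have key : ∀ D : Finset (Fin n), D ∈ (univ : Finset (Fin n)).powerset →
      n ^ (n - D.card) * surjCount (p + D.card) D.card
        = (fun j => n ^ (n - j) * surjCount (p + j) j) D.card := fun _ _ => rfl
  rw [show (Finset.univ : Finset (Finset (Fin n)))
      = (Finset.univ : Finset (Fin n)).powerset from (Finset.powerset_univ).symm,
    Finset.sum_powerset]
  have hcard : (Finset.univ : Finset (Fin n)).card = n := Finset.card_fin n
  rw [hcard]
  have hinner : ∀ j ∈ Finset.range (n + 1),
      ∑ D ∈ Finset.powersetCard j (Finset.univ : Finset (Fin n)),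
          n ^ (n - D.card) * surjCount (p + D.card) D.card
        = n.choose j * (n ^ (n - j) * surjCount (p + j) j) := by
    intro j _
    rw [Finset.sum_powersetCard j Finset.univ (fun m => n ^ (n - m) * surjCount (p + m) m)]
    rw [hcard, smul_eq_mul]
  rw [Finset.sum_congr rfl hinner]
  rw [← Finset.sum_range_reflect (fun j => n.choose j * (n ^ (n - j) * surjCount (p + j) j))]
  apply Finset.sum_congr rfl
  intro k hk
  have hk' : k ≤ n := Nat.lt_succ_iff.1 (Finset.mem_range.1 hk)
  have h1 : n + 1 - 1 - k = n - k := by omega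
  have h2 : n - (n - k) = k := Nat.sub_sub_self hk'
  have h3 : p + (n - k) = p + n - k := by omega
  rw [h1, Nat.choose_symm hk', h2, h3, mul_assoc]
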